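/- arXiv:2511.18592 — 3 statements merged into one kernel-verified Lean document; each statement's English description precedes it below -/
import Mathlib

section
/- Abstract quantitative local surjectivity (Newton's method). Let X and Y be real Banach spaces, let r⁺, r⁻, χ, L₀, L₁ ∈ (0,∞) with r⁻ < r⁺, let F : X → Y, and let F' : X → L(X;Y) be such that F has Fréchet derivative F'(x) at every x in the open ball B_X(0, r⁺) and x ↦ F'(x) is continuous on B_X(0, r⁺). Assume: (1) F(0) = 0, and every x ∈ B_X(0, r⁺) with ‖F(x)‖_Y ≤ χ satisfies ‖x‖_X ≤ r⁻; (2) ‖F(x)‖_Y + ‖F'(x)‖_{L(X;Y)} ≤ L₀ for every x ∈ B_X(0, r⁺); (3) there exists a map R : B_X(0, r⁺) → L(Y;X) such that for all x, x̃ ∈ B_X(0, r⁺) with x ≠ x̃ and all y ∈ Y: ‖R(x)‖_{L(Y;X)} + ‖R(x) − R(x̃)‖_{L(Y;X)}/‖x − x̃‖_X ≤ L₁ and F'(x)(R(x)y) = y. Then for every y ∈ Y with ‖y‖_Y ≤ χ there exists x ∈ X with ‖x‖_X ≤ r⁻ and F(x) = y. -/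
set_option maxHeartbeats 1000000


open Metric

/-- **Abstract quantitative local surjectivity** via Newton's method
(Theorem on abstract quantitative local surjectivity). -/
theorem abstract_quantitative_local_surjectivity
    {X Y : Type*} [NormedAddCommGroup X] [NormedSpace ℝ X] [CompleteSpace X]
    [NormedAddCommGroup Y] [NormedSpace ℝ Y] [CompleteSpace Y]
    (rp rm χ L₀ L₁ : ℝ) (hrp : 0 < rp) (hrm : 0 < rm) (hχ : 0 < χ)
    (hL₀ : 0 < L₀) (hL₁ : 0 < L₁) (hr : rm < rp)
    (F : X → Y) (F' : X → X →L[ℝ] Y)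
    (hdiff : ∀ x ∈ ball (0 : X) rp, HasFDerivAt F (F' x) x)
    (hcont : ContinuousOn F' (ball (0 : X) rp))
    -- (1)
    (h0 : F 0 = 0)
    (h1 : ∀ x ∈ ball (0 : X) rp, ‖F x‖ ≤ χ → ‖x‖ ≤ rm)
    -- (2)
    (h2 : ∀ x ∈ ball (0 : X) rp, ‖F x‖ + ‖F' x‖ ≤ L₀)
    -- (3)
    (R : X → Y →L[ℝ] X)
    (h3 : ∀ x ∈ ball (0 : X) rp, ∀ x' ∈ ball (0 : X) rp, x ≠ x' →
      ‖R x‖ + ‖R x - R x'‖ / ‖x - x'‖ ≤ L₁)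
    (h3' : ∀ x ∈ ball (0 : X) rp, ∀ y : Y, F' x (R x y) = y) :
    ∀ y : Y, ‖y‖ ≤ χ → ∃ x : X, ‖x‖ ≤ rm ∧ F x = y := by
  intro y hy
  by_cases hX : ∀ v : X, v = 0
  · -- trivial space: every y in question is 0
    have h0mem : (0 : X) ∈ ball (0 : X) rp := mem_ball_self hrp
    have hy0 : y = 0 := by
      have h := h3' 0 h0mem y
      rw [hX (R 0 y)] at h
      simpa using h.symm
    exact ⟨0, by simpa using hrm.le, by rw [h0, hy0]⟩
  push_neg at hX
  obtain ⟨v, hv⟩ := hX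
  have hvnorm : 0 < ‖v‖ := norm_pos_iff.mpr hv
  -- norm bound on R
  have hRnorm : ∀ x ∈ ball (0 : X) rp, ‖R x‖ ≤ L₁ := by
    intro x hx
    obtain ⟨ε, hε, hsub⟩ := Metric.isOpen_iff.mp isOpen_ball x hx
    set c : ℝ := ε / (2 * ‖v‖) with hc
    have hcpos : 0 < c := by positivity
    set x' : X := x + c • v with hx'def
    have hne : x ≠ x' := by
      intro hxx
      have : c • v = 0 := by
        have := hxx.symm
        rwa [hx'def, add_eq_left] at this
      exact hv (by simpa [smul_eq_zero, hcpos.ne'] using this)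
    have hx' : x' ∈ ball (0 : X) rp := by
      apply hsub
      rw [mem_ball, dist_eq_norm]
      have : ‖x' - x‖ = c * ‖v‖ := by
        rw [hx'def]
        simp [norm_smul, abs_of_pos hcpos]
      rw [hx'def] at this ⊢
      rw [add_sub_cancel_left, norm_smul, Real.norm_eq_abs, abs_of_pos hcpos]
      calc c * ‖v‖ = ε / 2 := by rw [hc, div_mul_eq_mul_div, mul_div_mul_right _ _ hvnorm.ne']
        _ < ε := by linarith
    have h := h3 x hx x' hx' hne
    have hnn : 0 ≤ ‖R x - R x'‖ / ‖x - x'‖ := div_nonneg (norm_nonneg _) (norm_nonneg _)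
    linarith
  -- Lipschitz bound on R
  have hRlip : ∀ x ∈ ball (0 : X) rp, ∀ x' ∈ ball (0 : X) rp,
      ‖R x - R x'‖ ≤ L₁ * ‖x - x'‖ := by
    intro x hx x' hx'
    rcases eq_or_ne x x' with rfl | hne
    · simp
    · have h := h3 x hx x' hx' hne
      have hn : 0 < ‖x - x'‖ := by rw [norm_pos_iff, sub_ne_zero]; exact hne
      have hle : ‖R x - R x'‖ / ‖x - x'‖ ≤ L₁ := by linarith [norm_nonneg (R x)]
      calc ‖R x - R x'‖ = ‖R x - R x'‖ / ‖x - x'‖ * ‖x - x'‖ := by field_simp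
        _ ≤ L₁ * ‖x - x'‖ := mul_le_mul_of_nonneg_right hle hn.le
  -- F' norm bound
  have hF'norm : ∀ x ∈ ball (0 : X) rp, ‖F' x‖ ≤ L₀ := by
    intro x hx
    have := h2 x hx
    linarith [norm_nonneg (F x)]
  -- Key Newton step estimate
  have key : ∀ (x : X) (w : Y), (∀ s ∈ Set.Icc (0:ℝ) 1, x + s • (R x w) ∈ ball (0 : X) rp) →
      ‖F (x + R x w) - F x - w‖ ≤ L₀ * L₁ * ‖R x w‖ * ‖w‖ := by
    intro x w hseg
    set h := R x w with hh
    have hφ : ∀ s ∈ Set.Icc (0:ℝ) 1,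
        HasDerivWithinAt (fun s : ℝ => F (x + s • h) - s • w)
          (F' (x + s • h) h - w) (Set.Icc 0 1) s := by
      intro s hs
      have hd : HasFDerivAt F (F' (x + s • h)) (x + s • h) := hdiff _ (hseg s hs)
      have hγ : HasDerivAt (fun t : ℝ => x + t • h) h s := by
        simpa using ((hasDerivAt_id s).smul_const h).const_add x
      have hA : HasDerivAt (fun t : ℝ => F (x + t • h)) (F' (x + s • h) h) s :=
        hd.comp_hasDerivAt s hγ
      have hB : HasDerivAt (fun t : ℝ => t • w) w s := by
        simpa using (hasDerivAt_id s).smul_const w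
      exact (hA.sub hB).hasDerivWithinAt
    have bound : ∀ s ∈ Set.Ico (0:ℝ) 1, ‖F' (x + s • h) h - w‖ ≤ L₀ * L₁ * ‖h‖ * ‖w‖ := by
      intro s hs
      have hxs : x + s • h ∈ ball (0 : X) rp := hseg s (Set.Ico_subset_Icc_self hs)
      have hx0 : x ∈ ball (0 : X) rp := by
        simpa using hseg 0 ⟨le_rfl, zero_le_one⟩
      have e1 : F' (x + s • h) h - w = F' (x + s • h) ((R x - R (x + s • h)) w) := by
        have e2 := h3' (x + s • h) hxs w
        rw [ContinuousLinearMap.sub_apply, map_sub, e2, hh]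
      rw [e1]
      have hnd : ‖x - (x + s • h)‖ = s * ‖h‖ := by
        have : x - (x + s • h) = -(s • h) := by abel
        rw [this, norm_neg, norm_smul, Real.norm_eq_abs, abs_of_nonneg hs.1]
      calc ‖F' (x + s • h) ((R x - R (x + s • h)) w)‖
          ≤ ‖F' (x + s • h)‖ * ‖(R x - R (x + s • h)) w‖ :=
            ContinuousLinearMap.le_opNorm _ _
        _ ≤ ‖F' (x + s • h)‖ * (‖R x - R (x + s • h)‖ * ‖w‖) :=
            mul_le_mul_of_nonneg_left (ContinuousLinearMap.le_opNorm _ _) (norm_nonneg _)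
        _ ≤ L₀ * ((L₁ * ‖x - (x + s • h)‖) * ‖w‖) :=
            mul_le_mul (hF'norm _ hxs)
              (mul_le_mul_of_nonneg_right (hRlip _ hx0 _ hxs) (norm_nonneg w))
              (by positivity) hL₀.le
        _ = L₀ * L₁ * (s * ‖h‖) * ‖w‖ := by rw [hnd]; ring
        _ ≤ L₀ * L₁ * ‖h‖ * ‖w‖ := by
            have hs1 : s ≤ 1 := hs.2.le
            have hA : 0 ≤ ‖h‖ - s * ‖h‖ := by nlinarith [norm_nonneg h, hs.1]
            have hB : (0:ℝ) ≤ L₀ * L₁ * ‖w‖ := by positivity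
            nlinarith [mul_nonneg hB hA]
    have hmv := norm_image_sub_le_of_norm_deriv_le_segment_01' hφ bound
    have e3 : (fun s : ℝ => F (x + s • h) - s • w) 1 - (fun s : ℝ => F (x + s • h) - s • w) 0
        = F (x + h) - F x - w := by
      simp only [one_smul, zero_smul, add_zero, sub_zero]
      abel
    rw [e3] at hmv
    exact hmv
  -- choose step size δ
  set K := L₀ * L₁ * L₁ with hK
  have hKpos : 0 < K := by positivity
  set δ : ℝ := min ((rp - rm) / (8 * L₁)) (1 / (2 * K)) with hδdef
  have hδ : 0 < δ :=
    lt_min (div_pos (by linarith) (by positivity)) (by positivity)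
  have hδ1 : 2 * L₁ * δ ≤ (rp - rm) / 2 := by
    have h := min_le_left ((rp - rm) / (8 * L₁)) (1 / (2 * K))
    rw [← hδdef, le_div_iff₀ (by positivity : (0:ℝ) < 8 * L₁)] at h
    nlinarith [mul_nonneg hL₁.le hδ.le]
  have hδ2 : K * δ ≤ 1 / 2 := by
    have h := min_le_right ((rp - rm) / (8 * L₁)) (1 / (2 * K))
    rw [← hδdef] at h
    rw [le_div_iff₀ (by positivity)] at h
    nlinarith
  -- Newton iteration step
  have step : ∀ x₀ : X, ‖x₀‖ ≤ rm → ∀ y' : Y, ‖y'‖ ≤ χ → ‖y' - F x₀‖ ≤ δ →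
      ∃ x : X, ‖x‖ ≤ rm ∧ F x = y' := by
    intro x₀ hx₀ y' hy' hres
    set a : ℕ → X := fun n => Nat.rec x₀ (fun _ xn => xn + R xn (y' - F xn)) n with ha
    have ha0 : a 0 = x₀ := rfl
    have haS : ∀ n, a (n + 1) = a n + R (a n) (y' - F (a n)) := fun n => rfl
    have inv : ∀ n, ‖a n - x₀‖ ≤ 2 * L₁ * δ * (1 - (1/2 : ℝ)^n)
        ∧ ‖y' - F (a n)‖ ≤ δ * (1/2 : ℝ)^n := by
      intro n
      induction n with
      | zero =>
        constructor
        · simp [ha0]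
        · simpa [ha0] using hres
      | succ n ih =>
        obtain ⟨ih1, ih2⟩ := ih
        have hpow0 : (0:ℝ) ≤ (1/2 : ℝ)^n := by positivity
        have hpow1 : ((1:ℝ)/2)^n ≤ 1 := pow_le_one₀ (by norm_num) (by norm_num)
        set w := y' - F (a n) with hw
        set h := R (a n) w with hh
        have hballn : a n ∈ ball (0 : X) rp := by
          rw [mem_ball_zero_iff]
          have ht : ‖a n‖ ≤ ‖a n - x₀‖ + ‖x₀‖ := by
            simpa using norm_add_le (a n - x₀) x₀
          nlinarith [hδ1]
        have hwn : ‖w‖ ≤ δ * (1/2 : ℝ)^n := ih2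
        have hhnorm : ‖h‖ ≤ L₁ * ‖w‖ := by
          calc ‖h‖ ≤ ‖R (a n)‖ * ‖w‖ := ContinuousLinearMap.le_opNorm _ _
            _ ≤ L₁ * ‖w‖ := mul_le_mul_of_nonneg_right (hRnorm _ hballn) (norm_nonneg w)
        have hhn2 : ‖h‖ ≤ L₁ * δ * (1/2 : ℝ)^n := by nlinarith [norm_nonneg w]
        have hseg : ∀ s ∈ Set.Icc (0:ℝ) 1, a n + s • h ∈ ball (0 : X) rp := by
          intro s hs
          rw [mem_ball_zero_iff]
          have ht : ‖a n + s • h‖ ≤ ‖a n - x₀‖ + ‖x₀‖ + s * ‖h‖ := by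
            calc ‖a n + s • h‖ ≤ ‖a n‖ + ‖s • h‖ := norm_add_le _ _
              _ ≤ (‖a n - x₀‖ + ‖x₀‖) + s * ‖h‖ := by
                  rw [norm_smul, Real.norm_eq_abs, abs_of_nonneg hs.1]
                  gcongr
                  simpa using norm_add_le (a n - x₀) x₀
          have hsh : s * ‖h‖ ≤ L₁ * δ * (1/2 : ℝ)^n := by
            nlinarith [norm_nonneg h, hs.1, hs.2]
          nlinarith [hδ1]
        have hkey := key (a n) w hseg
        rw [← hh] at hkey
        constructor
        · have : a (n + 1) - x₀ = (a n - x₀) + h := by rw [haS, ← hw, ← hh]; abel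
          rw [this]
          calc ‖(a n - x₀) + h‖ ≤ ‖a n - x₀‖ + ‖h‖ := norm_add_le _ _
            _ ≤ 2 * L₁ * δ * (1 - (1/2:ℝ)^(n+1)) := by
                rw [pow_succ]
                nlinarith
        · have e4 : y' - F (a (n + 1)) = -(F (a n + h) - F (a n) - w) := by
            rw [haS, ← hw, ← hh, hw]; abel
          rw [e4, norm_neg]
          have hq : L₀ * L₁ * ‖h‖ * ‖w‖ ≤ K * ‖w‖ * ‖w‖ := by
            rw [hK]
            nlinarith [mul_le_mul_of_nonneg_left hhnorm
              (mul_nonneg (mul_nonneg hL₀.le hL₁.le) (norm_nonneg w))]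
          have hKw : K * ‖w‖ ≤ 1 / 2 := by
            have : ‖w‖ ≤ δ := le_trans hwn (by nlinarith)
            nlinarith
          calc ‖F (a n + h) - F (a n) - w‖ ≤ L₀ * L₁ * ‖h‖ * ‖w‖ := hkey
            _ ≤ K * ‖w‖ * ‖w‖ := hq
            _ ≤ (1/2) * ‖w‖ := by nlinarith [norm_nonneg w]
            _ ≤ δ * (1/2:ℝ)^(n+1) := by rw [pow_succ]; nlinarith
    -- convergence
    have hdist : ∀ n, dist (a n) (a (n + 1)) ≤ (L₁ * δ) * (1/2 : ℝ)^n := by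
      intro n
      obtain ⟨_, ih2⟩ := inv n
      rw [dist_eq_norm, haS]
      have : a n - (a n + R (a n) (y' - F (a n))) = -(R (a n) (y' - F (a n))) := by abel
      rw [this, norm_neg]
      have hballn : a n ∈ ball (0 : X) rp := by
        rw [mem_ball_zero_iff]
        obtain ⟨ih1, _⟩ := inv n
        have ht : ‖a n‖ ≤ ‖a n - x₀‖ + ‖x₀‖ := by
          simpa using norm_add_le (a n - x₀) x₀
        have hpow0 : (0:ℝ) ≤ (1/2 : ℝ)^n := by positivity
        nlinarith [hδ1, mul_nonneg (by positivity : (0:ℝ) ≤ 2 * L₁ * δ) hpow0]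
      calc ‖R (a n) (y' - F (a n))‖ ≤ ‖R (a n)‖ * ‖y' - F (a n)‖ :=
            ContinuousLinearMap.le_opNorm _ _
        _ ≤ L₁ * (δ * (1/2:ℝ)^n) := by
            have hpow0 : (0:ℝ) ≤ (1/2 : ℝ)^n := by positivity
            have := hRnorm _ hballn
            nlinarith [norm_nonneg (y' - F (a n)), norm_nonneg (R (a n)),
              ContinuousLinearMap.opNorm_nonneg (R (a n))]
        _ = (L₁ * δ) * (1/2:ℝ)^n := by ring
    have hcauchy : CauchySeq a :=
      cauchySeq_of_le_geometric (1/2) (L₁ * δ) (by norm_num) hdist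
    obtain ⟨x, hxlim⟩ := cauchySeq_tendsto_of_complete hcauchy
    have hxbound : ‖x‖ ≤ rm + 2 * L₁ * δ := by
      have hb : ∀ n, ‖a n‖ ≤ rm + 2 * L₁ * δ := by
        intro n
        obtain ⟨ih1, _⟩ := inv n
        have ht : ‖a n‖ ≤ ‖a n - x₀‖ + ‖x₀‖ := by
          simpa using norm_add_le (a n - x₀) x₀
        have hpow0 : (0:ℝ) ≤ (1/2 : ℝ)^n := by positivity
        nlinarith [mul_nonneg (by positivity : (0:ℝ) ≤ 2 * L₁ * δ) hpow0]
      exact le_of_tendsto' hxlim.norm hb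
    have hxball : x ∈ ball (0 : X) rp := by
      rw [mem_ball_zero_iff]
      linarith [hδ1]
    have hFx : Filter.Tendsto (fun n => F (a n)) Filter.atTop (nhds (F x)) :=
      ((hdiff x hxball).continuousAt.tendsto).comp hxlim
    have hFy : Filter.Tendsto (fun n => F (a n)) Filter.atTop (nhds y') := by
      rw [tendsto_iff_norm_sub_tendsto_zero]
      have hgeo : Filter.Tendsto (fun n : ℕ => δ * (1/2:ℝ)^n) Filter.atTop (nhds 0) := by
        have := (tendsto_pow_atTop_nhds_zero_of_lt_one (by norm_num : (0:ℝ) ≤ 1/2)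
          (by norm_num : (1/2:ℝ) < 1)).const_mul δ
        simpa using this
      refine squeeze_zero (fun n => norm_nonneg _) (fun n => ?_) hgeo
      rw [norm_sub_rev]
      exact (inv n).2
    have hFeq : F x = y' := tendsto_nhds_unique hFx hFy
    exact ⟨x, h1 x hxball (by rw [hFeq]; exact hy'), hFeq⟩
  -- continuation
  set N := max 1 ⌈χ / δ⌉₊ with hN
  have hN0 : 0 < N := lt_of_lt_of_le one_pos (le_max_left _ _)
  have hNR : (0:ℝ) < (N:ℝ) := by exact_mod_cast hN0
  have hNδ : χ ≤ (N:ℝ) * δ := by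
    have h := Nat.le_ceil (χ / δ)
    have h' : (⌈χ / δ⌉₊ : ℝ) ≤ (N:ℝ) := by exact_mod_cast le_max_right 1 ⌈χ / δ⌉₊
    have : χ / δ ≤ (N:ℝ) := le_trans h h'
    rw [div_le_iff₀ hδ] at this
    linarith
  have main : ∀ k : ℕ, k ≤ N → ∃ x : X, ‖x‖ ≤ rm ∧ F x = ((k:ℝ)/(N:ℝ)) • y := by
    intro k
    induction k with
    | zero => intro _; exact ⟨0, by simpa using hrm.le, by simp [h0]⟩
    | succ k ih =>
      intro hk
      obtain ⟨x₀, hx₀, hFx₀⟩ := ih (Nat.le_of_succ_le hk)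
      have hkN : ((k:ℝ) + 1) ≤ (N:ℝ) := by exact_mod_cast hk
      have hfrac : ((k:ℝ) + 1) / (N:ℝ) ≤ 1 := (div_le_one hNR).mpr hkN
      have hfrac0 : 0 ≤ ((k:ℝ) + 1) / (N:ℝ) := by positivity
      have hstep := step x₀ hx₀ ((((k:ℝ)+1)/(N:ℝ)) • y) ?_ ?_
      · obtain ⟨x, hx1, hx2⟩ := hstep
        refine ⟨x, hx1, ?_⟩
        rw [hx2]
        push_cast
        ring_nf
      · rw [norm_smul, Real.norm_eq_abs, abs_of_nonneg hfrac0]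
        nlinarith [norm_nonneg y]
      · rw [hFx₀]
        have heq : (((k:ℝ) + 1) / (N:ℝ)) • y - ((k:ℝ)/(N:ℝ)) • y = (1/(N:ℝ)) • y := by
          rw [← sub_smul]
          congr 1
          field_simp
          ring
        rw [heq, norm_smul, Real.norm_eq_abs, abs_of_nonneg (by positivity : (0:ℝ) ≤ 1/(N:ℝ))]
        rw [div_mul_eq_mul_div, one_mul, div_le_iff₀ hNR]
        calc ‖y‖ ≤ χ := hy
          _ ≤ (N:ℝ) * δ := hNδ
          _ = δ * (N:ℝ) := by ring
  obtain ⟨x, hx, hFx⟩ := main N le_rfl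
  refine ⟨x, hx, ?_⟩
  rwa [div_self hNR.ne', one_smul] at hFx
end

section
/- The function Ϡ₀ : (0,∞) → ℝ defined by Ϡ₀(ξ) = sinh(2ξ) − 2e^{2ξ} log(1 + e^{−2ξ}) satisfies: Ϡ₀(ξ) → −2 log 2 as ξ → 0⁺, Ϡ₀(ξ) → +∞ as ξ → +∞, Ϡ₀'(ξ) > 0 for every ξ > 0, and consequently Ϡ₀ has exactly one zero in (0,∞). -/
open Real Filter Topology

noncomputable section

/-- The frequency-zero symbol `Ϡ₀(ξ) = sinh(2ξ) − 2e^{2ξ} log(1 + e^{−2ξ})` of the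
linearized rotating-patch operator on the boundary of the Kirchhoff ellipse. -/
def Sampi₀ (ξ : ℝ) : ℝ :=
  Real.sinh (2 * ξ) - 2 * Real.exp (2 * ξ) * Real.log (1 + Real.exp (-(2 * ξ)))

lemma sampi_cont : Continuous Sampi₀ := by
  have h1 : Continuous fun x : ℝ => 2 * x := by continuity
  have h2 : Continuous fun x : ℝ => 1 + Real.exp (-(2 * x)) := by continuity
  have hne : ∀ x : ℝ, 1 + Real.exp (-(2 * x)) ≠ 0 := fun x => by positivity
  exact (Real.continuous_sinh.comp h1).sub
    ((continuous_const.mul (Real.continuous_exp.comp h1)).mul (h2.log hne))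

lemma sampi_hasDerivAt (ξ : ℝ) :
    HasDerivAt Sampi₀
      (Real.cosh (2 * ξ) * 2
        - 2 * ((Real.exp (2 * ξ) * 2) * Real.log (1 + Real.exp (-(2 * ξ)))
          + Real.exp (2 * ξ) * ((1 + Real.exp (-(2 * ξ)))⁻¹ * (Real.exp (-(2 * ξ)) * (-2))))) ξ := by
  have h2 : HasDerivAt (fun x : ℝ => 2 * x) 2 ξ := by
    simpa using (hasDerivAt_id ξ).const_mul (2 : ℝ)
  have hneg : HasDerivAt (fun x : ℝ => -(2 * x)) (-2) ξ := h2.neg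
  have hsinh : HasDerivAt (fun x : ℝ => Real.sinh (2 * x)) (Real.cosh (2 * ξ) * 2) ξ :=
    (Real.hasDerivAt_sinh (2 * ξ)).comp ξ h2
  have hexp : HasDerivAt (fun x : ℝ => Real.exp (2 * x)) (Real.exp (2 * ξ) * 2) ξ :=
    (Real.hasDerivAt_exp (2 * ξ)).comp ξ h2
  have hexpneg : HasDerivAt (fun x : ℝ => Real.exp (-(2 * x)))
      (Real.exp (-(2 * ξ)) * (-2)) ξ := by
    have := (Real.hasDerivAt_exp (-(2 * ξ))).comp ξ hneg; exact this
  have hin : HasDerivAt (fun x : ℝ => 1 + Real.exp (-(2 * x)))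
      (Real.exp (-(2 * ξ)) * (-2)) ξ := hexpneg.const_add 1
  have hpos : (0 : ℝ) < 1 + Real.exp (-(2 * ξ)) := by positivity
  have hlog : HasDerivAt (fun x : ℝ => Real.log (1 + Real.exp (-(2 * x))))
      ((1 + Real.exp (-(2 * ξ)))⁻¹ * (Real.exp (-(2 * ξ)) * (-2))) ξ :=
    by have := (Real.hasDerivAt_log hpos.ne').comp ξ hin; exact this
  have hmul := (hexp.mul hlog).const_mul (2 : ℝ)
  have hfun : Sampi₀ = fun x : ℝ =>
      Real.sinh (2 * x) - 2 * (Real.exp (2 * x) * Real.log (1 + Real.exp (-(2 * x)))) := by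
    funext x; rw [Sampi₀]; ring
  have h := hsinh.sub hmul
  rw [hfun]
  exact h

lemma sampi_deriv_pos (ξ : ℝ) (hξ : 0 < ξ) :
    0 < Real.cosh (2 * ξ) * 2
        - 2 * ((Real.exp (2 * ξ) * 2) * Real.log (1 + Real.exp (-(2 * ξ)))
          + Real.exp (2 * ξ) * ((1 + Real.exp (-(2 * ξ)))⁻¹ * (Real.exp (-(2 * ξ)) * (-2)))) := by
  set u := Real.exp (-(2 * ξ)) with hu
  have hu0 : 0 < u := Real.exp_pos _
  have hu1 : u < 1 := Real.exp_lt_one_iff.mpr (by linarith)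
  have hinv : Real.exp (2 * ξ) = u⁻¹ := by
    rw [hu, ← Real.exp_neg, neg_neg]
  have hcosh : Real.cosh (2 * ξ) = (u⁻¹ + u) / 2 := by
    rw [Real.cosh_eq, hinv, hu]
  set L := Real.log (1 + u) with hL
  have hLlt : L < u := by
    have h := Real.log_lt_sub_one_of_pos (show (0:ℝ) < 1 + u by positivity)
      (by intro h; nlinarith)
    rw [hL]; linarith
  have key : 0 < (1 + u ^ 2) * (1 + u) + 4 * u - 4 * (1 + u) * L := by
    nlinarith [mul_pos (show (0:ℝ) < 1 - u by linarith)
        (show (0:ℝ) < 1 + 2 * u - u ^ 2 by nlinarith),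
      mul_pos (show (0:ℝ) < 1 + u by linarith) (sub_pos.mpr hLlt)]
  have heq : Real.cosh (2 * ξ) * 2
        - 2 * ((Real.exp (2 * ξ) * 2) * L
          + Real.exp (2 * ξ) * ((1 + u)⁻¹ * (u * (-2))))
      = ((1 + u ^ 2) * (1 + u) + 4 * u - 4 * (1 + u) * L) / (u * (1 + u)) := by
    rw [hcosh, hinv]
    field_simp
    ring
  rw [heq]
  exact div_pos key (by positivity)

/-- `Ϡ₀` tends to `−2 log 2` at `0⁺`, tends to `+∞` at `+∞`, has positive
derivative on `(0, ∞)`, and consequently has exactly one zero in `(0, ∞)`. -/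
theorem sampi_zero_has_unique_zero :
    Tendsto Sampi₀ (nhdsWithin 0 (Set.Ioi 0)) (nhds (-(2 * Real.log 2))) ∧
    Tendsto Sampi₀ atTop atTop ∧
    (∀ ξ : ℝ, 0 < ξ → ∃ d : ℝ, 0 < d ∧ HasDerivAt Sampi₀ d ξ) ∧
    (∃! ξ : ℝ, 0 < ξ ∧ Sampi₀ ξ = 0) := by
  have hcont := sampi_cont
  have h0val : Sampi₀ 0 = -(2 * Real.log 2) := by
    simp [Sampi₀]
    norm_num
  have h1 : Tendsto Sampi₀ (nhdsWithin 0 (Set.Ioi 0)) (nhds (-(2 * Real.log 2))) := by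
    rw [← h0val]
    exact (hcont.tendsto 0).mono_left nhdsWithin_le_nhds
  have hbound : ∀ ξ : ℝ, ξ ≥ 0 → (1 / 2) * Real.exp (2 * ξ) + (-3) ≤ Sampi₀ ξ := by
    intro ξ hξ0
    have hu0 : (0:ℝ) < Real.exp (-(2 * ξ)) := Real.exp_pos _
    have hLle : Real.log (1 + Real.exp (-(2 * ξ))) ≤ Real.exp (-(2 * ξ)) := by
      have := Real.log_le_sub_one_of_pos (show (0:ℝ) < 1 + Real.exp (-(2 * ξ)) by positivity)
      linarith
    have hprod : Real.exp (2 * ξ) * Real.exp (-(2 * ξ)) = 1 := by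
      rw [← Real.exp_add]; norm_num
    have hmul : 2 * Real.exp (2 * ξ) * Real.log (1 + Real.exp (-(2 * ξ))) ≤ 2 := by
      have h := mul_le_mul_of_nonneg_left hLle
        (show (0:ℝ) ≤ 2 * Real.exp (2 * ξ) by positivity)
      calc 2 * Real.exp (2 * ξ) * Real.log (1 + Real.exp (-(2 * ξ)))
          ≤ 2 * Real.exp (2 * ξ) * Real.exp (-(2 * ξ)) := by
            rw [mul_assoc, mul_assoc]; linarith [h]
        _ = 2 := by rw [mul_assoc, hprod]; norm_num
    have hexpneg : Real.exp (-(2 * ξ)) ≤ 1 := Real.exp_le_one_iff.mpr (by linarith)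
    have hsinh : (1 / 2) * Real.exp (2 * ξ) - 1 ≤ Real.sinh (2 * ξ) := by
      rw [Real.sinh_eq]
      linarith
    simp only [Sampi₀]
    linarith
  have h2 : Tendsto Sampi₀ atTop atTop := by
    apply tendsto_atTop_mono' _ (eventually_atTop.mpr ⟨0, hbound⟩)
    apply tendsto_atTop_add_const_right
    exact Tendsto.const_mul_atTop (by norm_num : (0:ℝ) < 1/2)
      (Real.tendsto_exp_atTop.comp (Tendsto.const_mul_atTop two_pos tendsto_id))
  have h3 : ∀ ξ : ℝ, 0 < ξ → ∃ d : ℝ, 0 < d ∧ HasDerivAt Sampi₀ d ξ := by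
    intro ξ hξ
    exact ⟨_, sampi_deriv_pos ξ hξ, sampi_hasDerivAt ξ⟩
  have hmono : StrictMonoOn Sampi₀ (Set.Ici 0) := by
    apply strictMonoOn_of_deriv_pos (convex_Ici 0) hcont.continuousOn
    intro x hx
    rw [interior_Ici] at hx
    obtain ⟨d, hd0, hder⟩ := h3 x hx
    rw [hder.deriv]
    exact hd0
  refine ⟨h1, h2, h3, ?_⟩
  have hneg : -(2 * Real.log 2) < 0 := by
    have := Real.log_pos (by norm_num : (1:ℝ) < 2); linarith
  obtain ⟨a, hfa, ha⟩ := ((h1.eventually_lt_const hneg).and eventually_mem_nhdsWithin).exists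
  obtain ⟨b, hfb, hba⟩ := ((h2.eventually_gt_atTop 0).and (eventually_gt_atTop a)).exists
  have ha0 : 0 < a := ha
  have hab : a ≤ b := hba.le
  obtain ⟨ξ, hξmem, hξ0⟩ := intermediate_value_Icc hab hcont.continuousOn ⟨hfa.le, hfb.le⟩
  have hξpos : 0 < ξ := lt_of_lt_of_le ha0 hξmem.1
  refine ⟨ξ, ⟨hξpos, hξ0⟩, ?_⟩
  rintro y ⟨hy, hy0⟩
  exact hmono.injOn (Set.mem_Ici.mpr hy.le) (Set.mem_Ici.mpr hξpos.le) (by rw [hy0, hξ0])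
end
end

section
/- Logarithmic interpolation inequality (whole-plane case). For g : ℝ² → ℝ^d define the log-Lipschitz seminorm [g]_{LL} = sup_{x≠y} ‖g(x) − g(y)‖/(‖x−y‖(1 + |log‖x−y‖|)), and for f : ℝ² → ℝ set ‖f‖_{LL} = sup_{ℝ²}|f| + [f]_{LL}, ‖f‖_{C¹} = sup_{ℝ²}|f| + sup_{ℝ²}‖∇f‖, and ‖f‖_{LL¹} = ‖f‖_{C¹} + [∇f]_{LL}. Then there exist constants C, c > 0 such that every continuously differentiable f : ℝ² → ℝ with f not identically zero and ‖f‖_{LL¹} < ∞ satisfies ‖f‖_{LL} ≤ c‖f‖_{LL¹} and ‖f‖_{C¹} ≤ C · ‖f‖_{LL} · (1 + log(c‖f‖_{LL¹}/‖f‖_{LL})). -/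
open Real

noncomputable section

/-- The Euclidean plane. -/
abbrev Pt := EuclideanSpace ℝ (Fin 2)

/-- The log-Lipschitz seminorm
`[g]_{LL} = sup_{x ≠ y} ‖g x − g y‖/(‖x−y‖(1 + |log ‖x−y‖|))`. -/
def llSemi {E : Type*} [NormedAddCommGroup E] (g : Pt → E) : ℝ :=
  ⨆ x : Pt, ⨆ y : Pt, ⨆ _ : x ≠ y,
    ‖g x - g y‖ / (‖x - y‖ * (1 + |Real.log ‖x - y‖|))

/-- The log-Lipschitz norm `‖f‖_{LL} = sup |f| + [f]_{LL}`. -/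
def llNorm (f : Pt → ℝ) : ℝ := (⨆ x : Pt, |f x|) + llSemi f

/-- The `C¹` norm `‖f‖_{C¹} = sup |f| + sup ‖∇f‖`. -/
def c1Norm (f : Pt → ℝ) : ℝ := (⨆ x : Pt, |f x|) + ⨆ x : Pt, ‖gradient f x‖

/-- The norm `‖f‖_{LL¹} = ‖f‖_{C¹} + [∇f]_{LL}`. -/
def ll1Norm (f : Pt → ℝ) : ℝ := c1Norm f + llSemi (fun x => gradient f x)

namespace Aux

def quot {E : Type*} [NormedAddCommGroup E] (g : Pt → E) (x y : Pt) : ℝ :=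
  ‖g x - g y‖ / (‖x - y‖ * (1 + |Real.log ‖x - y‖|))

lemma quot_nonneg {E : Type*} [NormedAddCommGroup E] (g : Pt → E) (x y : Pt) :
    0 ≤ quot g x y := by
  apply div_nonneg (norm_nonneg _)
  positivity

lemma denom_pos {x y : Pt} (h : x ≠ y) : 0 < ‖x - y‖ * (1 + |Real.log ‖x - y‖|) := by
  have : 0 < ‖x - y‖ := by
    rw [norm_pos_iff, sub_ne_zero]; exact h
  positivity

lemma inner_sup_le {E : Type*} [NormedAddCommGroup E] {g : Pt → E} {M : ℝ}
    (hM : ∀ x y : Pt, x ≠ y → quot g x y ≤ M) (x y : Pt) :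
    (⨆ _ : x ≠ y, quot g x y) ≤ max M 0 := by
  by_cases h : x ≠ y
  · haveI : Nonempty (x ≠ y) := ⟨h⟩
    rw [ciSup_const]
    exact le_max_of_le_left (hM x y h)
  · haveI : IsEmpty (x ≠ y) := ⟨fun h' => h h'⟩
    rw [iSup, Set.range_eq_empty, Real.sSup_empty]
    exact le_max_right _ _

lemma llSemi_le {E : Type*} [NormedAddCommGroup E] {g : Pt → E} {M : ℝ} (hM0 : 0 ≤ M)
    (hM : ∀ x y : Pt, x ≠ y → quot g x y ≤ M) : llSemi g ≤ M := by
  have hmax : max M 0 = M := max_eq_left hM0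
  apply Real.iSup_le _ hM0
  intro x
  apply Real.iSup_le _ hM0
  intro y
  rw [← hmax]
  exact inner_sup_le hM x y

lemma le_llSemi {E : Type*} [NormedAddCommGroup E] {g : Pt → E} {M : ℝ}
    (hM : ∀ x y : Pt, x ≠ y → quot g x y ≤ M) {x y : Pt} (hxy : x ≠ y) :
    quot g x y ≤ llSemi g := by
  haveI : Nonempty (x ≠ y) := ⟨hxy⟩
  have h1 : quot g x y = ⨆ _ : x ≠ y, quot g x y := (ciSup_const).symm
  have hb1 : BddAbove (Set.range fun y : Pt => ⨆ _ : x ≠ y, quot g x y) := by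
    refine ⟨max M 0, ?_⟩
    rintro _ ⟨y', rfl⟩
    exact inner_sup_le hM x y'
  have h2 : (⨆ _ : x ≠ y, quot g x y) ≤ ⨆ y : Pt, ⨆ _ : x ≠ y, quot g x y :=
    le_ciSup hb1 y
  have hb2 : BddAbove (Set.range fun x : Pt => ⨆ y : Pt, ⨆ _ : x ≠ y, quot g x y) := by
    refine ⟨max M 0, ?_⟩
    rintro _ ⟨x', rfl⟩
    exact Real.iSup_le (fun y' => inner_sup_le hM x' y') (le_max_right _ _)
  have h3 : (⨆ y : Pt, ⨆ _ : x ≠ y, quot g x y) ≤ llSemi g := le_ciSup hb2 x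
  calc quot g x y = _ := h1
    _ ≤ _ := h2
    _ ≤ _ := h3

lemma diff_le {E : Type*} [NormedAddCommGroup E] {g : Pt → E} {M : ℝ}
    (hM : ∀ x y : Pt, x ≠ y → quot g x y ≤ M) (x y : Pt) :
    ‖g x - g y‖ ≤ llSemi g * (‖x - y‖ * (1 + |Real.log ‖x - y‖|)) := by
  by_cases h : x = y
  · subst h; simp
  · exact (div_le_iff₀ (denom_pos h)).mp (le_llSemi hM h)

lemma tlog_mono {t δ : ℝ} (ht : 0 < t) (htδ : t ≤ δ) (hδ : δ ≤ 1) :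
    t * (1 + |Real.log t|) ≤ δ * (1 + |Real.log δ|) := by
  have ht1 : t ≤ 1 := htδ.trans hδ
  have hδ0 : 0 < δ := lt_of_lt_of_le ht htδ
  rw [abs_of_nonpos (Real.log_nonpos ht.le ht1), abs_of_nonpos (Real.log_nonpos hδ0.le hδ)]
  have hmono : MonotoneOn (fun s : ℝ => s * (1 + -Real.log s)) (Set.Ioc 0 1) := by
    apply monotoneOn_of_deriv_nonneg (convex_Ioc 0 1)
    · apply ContinuousOn.mul continuousOn_id
      apply ContinuousOn.add continuousOn_const
      exact (Real.continuousOn_log.mono (fun s hs => by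
        simp only [Set.mem_compl_iff, Set.mem_singleton_iff]
        exact ne_of_gt hs.1)).neg
    · intro s hs
      rw [interior_Ioc] at hs
      have hds : HasDerivAt (fun s : ℝ => s * (1 + -Real.log s)) (-Real.log s) s := by
        have h1 : HasDerivAt (fun s : ℝ => s * Real.log s) (Real.log s + 1) s :=
          Real.hasDerivAt_mul_log (ne_of_gt hs.1)
        have h2 : HasDerivAt (fun s : ℝ => s - s * Real.log s) (1 - (Real.log s + 1)) s :=
          (hasDerivAt_id s).sub h1
        have : (fun s : ℝ => s - s * Real.log s) = (fun s : ℝ => s * (1 + -Real.log s)) := by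
          funext u; ring
        rw [this] at h2
        convert h2 using 1; ring
      exact hds.differentiableAt.differentiableWithinAt
    · intro s hs
      rw [interior_Ioc] at hs
      have hds : HasDerivAt (fun s : ℝ => s * (1 + -Real.log s)) (-Real.log s) s := by
        have h1 : HasDerivAt (fun s : ℝ => s * Real.log s) (Real.log s + 1) s :=
          Real.hasDerivAt_mul_log (ne_of_gt hs.1)
        have h2 : HasDerivAt (fun s : ℝ => s - s * Real.log s) (1 - (Real.log s + 1)) s :=
          (hasDerivAt_id s).sub h1
        have : (fun s : ℝ => s - s * Real.log s) = (fun s : ℝ => s * (1 + -Real.log s)) := by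
          funext u; ring
        rw [this] at h2
        convert h2 using 1; ring
      rw [hds.deriv]
      simp [Real.log_nonpos hs.1.le hs.2.le]
  exact hmono ⟨ht, ht1⟩ ⟨hδ0, hδ⟩ htδ

end Aux

set_option maxHeartbeats 1000000 in
/-- **Logarithmic interpolation inequality** (whole-plane case). -/
theorem logarithmic_interpolation_inequality :
    ∃ C c : ℝ, 0 < C ∧ 0 < c ∧
      ∀ f : Pt → ℝ, ContDiff ℝ 1 f → (∃ x : Pt, f x ≠ 0) →
        -- finiteness of `‖f‖_{LL¹}`
        BddAbove (Set.range fun x : Pt => |f x|) →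
        BddAbove (Set.range fun x : Pt => ‖gradient f x‖) →
        BddAbove (Set.range fun p : Pt × Pt =>
          ‖gradient f p.1 - gradient f p.2‖ /
            (‖p.1 - p.2‖ * (1 + |Real.log ‖p.1 - p.2‖|))) →
        llNorm f ≤ c * ll1Norm f ∧
        c1Norm f ≤ C * llNorm f * (1 + Real.log (c * ll1Norm f / llNorm f)) := by
  refine ⟨3, 3, by norm_num, by norm_num, ?_⟩
  intro f hf hne hbA hbB hbL
  obtain ⟨x₀, hx₀⟩ := hne
  set A := ⨆ x : Pt, |f x| with hAdef
  set B := ⨆ x : Pt, ‖gradient f x‖ with hBdef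
  set S := llSemi f with hSdef
  set L := llSemi (fun x => gradient f x) with hLdef
  have hdiff : ∀ x : Pt, DifferentiableAt ℝ f x :=
    fun x => (hf.differentiable one_ne_zero).differentiableAt
  have habsA : ∀ x : Pt, |f x| ≤ A := fun x => le_ciSup hbA x
  have hApos : 0 < A := lt_of_lt_of_le (abs_pos.mpr hx₀) (habsA x₀)
  have hBle : ∀ x : Pt, ‖gradient f x‖ ≤ B := fun x => le_ciSup hbB x
  have hB0 : 0 ≤ B := le_trans (norm_nonneg _) (hBle x₀)
  -- gradient / fderiv relations
  have hgradf : ∀ x : Pt, (InnerProductSpace.toDual ℝ Pt) (gradient f x) = fderiv ℝ f x := by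
    intro x; rw [gradient]; exact (InnerProductSpace.toDual ℝ Pt).apply_symm_apply _
  have hgn : ∀ x : Pt, ‖fderiv ℝ f x‖ = ‖gradient f x‖ := by
    intro x
    rw [← hgradf x]
    exact LinearIsometryEquiv.norm_map _ _
  -- mean value theorem: global Lipschitz bound by B
  have hMVT : ∀ x y : Pt, |f x - f y| ≤ B * ‖x - y‖ := by
    intro x y
    have := Convex.norm_image_sub_le_of_norm_fderiv_le (𝕜 := ℝ) (f := f) (C := B)
      (s := Set.univ) (fun z _ => hdiff z)
      (fun z _ => by rw [hgn z]; exact hBle z) convex_univ (Set.mem_univ y) (Set.mem_univ x)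
    simpa [Real.norm_eq_abs] using this
  -- bound for the quotient of f
  have hMf : ∀ x y : Pt, x ≠ y → Aux.quot f x y ≤ 2 * A + B := by
    intro x y hxy
    have hr : 0 < ‖x - y‖ := by rw [norm_pos_iff, sub_ne_zero]; exact hxy
    rw [Aux.quot, div_le_iff₀ (Aux.denom_pos hxy)]
    have habs : 0 ≤ |Real.log ‖x - y‖| := abs_nonneg _
    rcases le_or_gt 1 ‖x - y‖ with h1 | h1
    · have h2 : ‖f x - f y‖ ≤ 2 * A := by
        rw [Real.norm_eq_abs]
        calc |f x - f y| ≤ |f x| + |f y| := abs_sub _ _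
          _ ≤ 2 * A := by linarith [habsA x, habsA y]
      have hprod : 1 ≤ ‖x - y‖ * (1 + |Real.log ‖x - y‖|) := by nlinarith
      calc ‖f x - f y‖ ≤ 2 * A := h2
        _ = 2 * A * 1 := by ring
        _ ≤ (2 * A + B) * (‖x - y‖ * (1 + |Real.log ‖x - y‖|)) :=
            mul_le_mul (by linarith) hprod zero_le_one (by positivity)
    · have h2 : ‖f x - f y‖ ≤ B * ‖x - y‖ := by
        rw [Real.norm_eq_abs]; exact hMVT x y
      have h3 : B * ‖x - y‖ ≤ (2 * A + B) * (‖x - y‖ * (1 + |Real.log ‖x - y‖|)) := by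
        nlinarith [mul_nonneg (mul_nonneg hApos.le hr.le) habs,
          mul_nonneg (mul_nonneg hB0 hr.le) habs, mul_nonneg hApos.le hr.le]
      linarith
  -- bound for the quotient of the gradient
  obtain ⟨M, hM⟩ := hbL
  have hMg : ∀ x y : Pt, x ≠ y → Aux.quot (fun x => gradient f x) x y ≤ M := by
    intro x y _
    exact hM ⟨(x, y), rfl⟩
  have hS2 : S ≤ 2 * A + B := Aux.llSemi_le (by positivity) hMf
  obtain ⟨u, v, huv⟩ := exists_pair_ne Pt
  have hS0 : 0 ≤ S := le_trans (Aux.quot_nonneg f u v) (Aux.le_llSemi hMf huv)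
  have hL0 : 0 ≤ L := le_trans (Aux.quot_nonneg _ u v) (Aux.le_llSemi hMg huv)
  set N := A + S with hNdef
  set K := A + B + L with hKdef
  have hN : 0 < N := by positivity
  have hK : 0 < K := by positivity
  have hNK : N ≤ 3 * K := by linarith
  have hllN : llNorm f = N := rfl
  have hll1 : ll1Norm f = K := rfl
  constructor
  · rw [hllN, hll1]; linarith
  -- second inequality
  set δ := N / (3 * K) with hδdef
  have hδ0 : 0 < δ := by positivity
  have hδ1 : δ ≤ 1 := by rw [hδdef, div_le_one (by positivity)]; linarith
  set Λ := 1 + Real.log (3 * K / N) with hΛdef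
  have hlogδ : 1 + |Real.log δ| = Λ := by
    rw [abs_of_nonpos (Real.log_nonpos hδ0.le hδ1), hΛdef, hδdef, ← Real.log_inv, inv_div]
  have hΛ1 : 1 ≤ Λ := by
    rw [hΛdef]
    have : (0:ℝ) ≤ Real.log (3 * K / N) :=
      Real.log_nonneg (by rw [le_div_iff₀ hN]; linarith)
    linarith
  have hΛ0 : 0 < Λ := lt_of_lt_of_le one_pos hΛ1
  -- pointwise gradient bound
  have hpt : ∀ x : Pt, ‖gradient f x‖ ≤ 2 * N * Λ := by
    intro x
    by_cases hgx : gradient f x = 0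
    · rw [hgx, norm_zero]; positivity
    set w := gradient f x with hwdef
    have hw : 0 < ‖w‖ := norm_pos_iff.mpr hgx
    set e := ‖w‖⁻¹ • w with hedef
    have he : ‖e‖ = 1 := norm_smul_inv_norm hgx
    set y := x + δ • e with hydef
    have hyx : y - x = δ • e := by rw [hydef]; abel
    have hnyx : ‖y - x‖ = δ := by
      rw [hyx, norm_smul, he, Real.norm_eq_abs, abs_of_pos hδ0, mul_one]
    have hxy : x ≠ y := by
      intro h
      have : ‖y - x‖ = 0 := by rw [← h, sub_self, norm_zero]
      rw [hnyx] at this; exact absurd this (ne_of_gt hδ0)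
    -- the auxiliary function ψ
    set ψ := fun z : Pt => f z - (innerSL ℝ w) z with hψdef
    have hψd : ∀ z : Pt, HasFDerivAt ψ (fderiv ℝ f z - innerSL ℝ w) z := by
      intro z
      exact ((hdiff z).hasFDerivAt).sub ((innerSL ℝ w).hasFDerivAt)
    have hψnorm : ∀ z : Pt, ‖fderiv ℝ f z - innerSL ℝ w‖ = ‖gradient f z - w‖ := by
      intro z
      have h1 : fderiv ℝ f z - innerSL ℝ w
          = (InnerProductSpace.toDual ℝ Pt) (gradient f z - w) := by
        rw [map_sub, hgradf z]; rfl
      rw [h1]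
      exact LinearIsometryEquiv.norm_map _ _
    set Cb := L * (δ * (1 + |Real.log δ|)) with hCbdef
    have hbound : ∀ z ∈ segment ℝ x y, ‖fderiv ℝ ψ z‖ ≤ Cb := by
      intro z hz
      rw [show fderiv ℝ ψ z = fderiv ℝ f z - innerSL ℝ w from (hψd z).fderiv,
        hψnorm z]
      have hzx : ‖z - x‖ ≤ δ := by
        have h2 := dist_add_dist_of_mem_segment hz
        have h3 : dist x z ≤ dist x y := by
          have := dist_nonneg (x := z) (y := y); linarith
        rw [dist_eq_norm] at h3
        calc ‖z - x‖ = ‖x - z‖ := by rw [norm_sub_rev]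
          _ ≤ ‖x - y‖ := h3
          _ = δ := by rw [norm_sub_rev]; exact hnyx
      by_cases hzx0 : z = x
      · rw [hzx0, hwdef, sub_self, norm_zero, hCbdef]
        have : 0 ≤ 1 + |Real.log δ| := by positivity
        positivity
      · have hd := Aux.diff_le hMg z x
        have hr : 0 < ‖z - x‖ := by rw [norm_pos_iff, sub_ne_zero]; exact hzx0
        have hmono := Aux.tlog_mono hr hzx hδ1
        calc ‖gradient f z - w‖ ≤ L * (‖z - x‖ * (1 + |Real.log ‖z - x‖|)) := hd
          _ ≤ Cb := by rw [hCbdef]; exact mul_le_mul_of_nonneg_left hmono hL0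
    have hkey := Convex.norm_image_sub_le_of_norm_fderiv_le (𝕜 := ℝ)
      (fun z _ => ((hψd z).differentiableAt))
      hbound (convex_segment x y) (left_mem_segment ℝ x y) (right_mem_segment ℝ x y)
    -- ψ y - ψ x = f y - f x - δ * ‖w‖
    have hinner : (innerSL ℝ w) y - (innerSL ℝ w) x = δ * ‖w‖ := by
      have h1 : (innerSL ℝ w) y - (innerSL ℝ w) x = (innerSL ℝ w) (y - x) := by
        rw [map_sub]
      rw [h1, hyx]
      simp only [innerSL_apply_apply]
      rw [real_inner_smul_right, hedef, real_inner_smul_right, real_inner_self_eq_norm_sq]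
      field_simp
    have hψdiff : ψ y - ψ x = f y - f x - δ * ‖w‖ := by
      rw [hψdef]; simp only []
      rw [← hinner]; ring
    rw [hψdiff, hnyx, Real.norm_eq_abs] at hkey
    have hfd : |f y - f x| ≤ S * (δ * (1 + |Real.log δ|)) := by
      have := Aux.diff_le hMf y x
      rw [Real.norm_eq_abs, hnyx] at this
      exact this
    have h5 : δ * ‖w‖ ≤ |f y - f x| + Cb * δ := by
      have h7 : |(f y - f x) - (f y - f x - δ * ‖w‖)| ≤ |f y - f x| + |f y - f x - δ * ‖w‖| :=
        abs_sub _ _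
      have h8 : (f y - f x) - (f y - f x - δ * ‖w‖) = δ * ‖w‖ := by ring
      rw [h8] at h7
      have h9 := le_trans (le_abs_self (δ * ‖w‖)) h7
      linarith [hkey]
    -- combine
    have hLδ : L * δ ≤ N := by
      have hL3K : L ≤ 3 * K := by linarith
      have h10 : L * δ ≤ (3 * K) * δ := mul_le_mul_of_nonneg_right hL3K hδ0.le
      have h11 : (3 * K) * δ = N := by rw [hδdef]; field_simp
      linarith
    have h8 : δ * ‖w‖ ≤ δ * ((S + L * δ) * (1 + |Real.log δ|)) := by
      have h12 : S * (δ * (1 + |Real.log δ|)) + Cb * δ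
          = δ * ((S + L * δ) * (1 + |Real.log δ|)) := by rw [hCbdef]; ring
      linarith [hfd]
    have h9 : ‖w‖ ≤ (S + L * δ) * (1 + |Real.log δ|) :=
      le_of_mul_le_mul_left h8 hδ0
    calc ‖w‖ ≤ (S + L * δ) * (1 + |Real.log δ|) := h9
      _ = (S + L * δ) * Λ := by rw [hlogδ]
      _ ≤ 2 * N * Λ := by
          have hSL : S + L * δ ≤ 2 * N := by linarith [hLδ]
          calc (S + L * δ) * Λ ≤ (2 * N) * Λ := mul_le_mul_of_nonneg_right hSL hΛ0.le
            _ = 2 * N * Λ := by ring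
  -- conclude
  have hBN : B ≤ 2 * N * Λ := Real.iSup_le hpt (by positivity)
  rw [hllN, hll1, c1Norm, ← hAdef, ← hBdef, ← hΛdef]
  have hNΛ : N * 1 ≤ N * Λ := mul_le_mul_of_nonneg_left hΛ1 hN.le
  linarith [hBN, hNΛ, hS0]
end
end
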